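/- If two correct processes each deliver an order message confirming operation o with output hashes h₁ and h₂, and both are justified by confirming sets of f + 1 equal approve hashes among approve messages signed in the same configuration, and at most f processes are faulty while all correct processes that signed approve messages for o in this configuration computed the same deterministic hash, then h₁ = h₂. -/
import Mathlib

theorem confirmed_hash_unique {α β : Type*} [DecidableEq α]
    (P F : Finset α) (f : ℕ)
    (hF : F ⊆ P) (hFcard : F.card ≤ f)
    (H : α → β) (h : β)
    (hdet : ∀ p ∈ P, p ∉ F → H p = h)
    (sig₁ sig₂ : α → β)
    (hsig : ∀ p ∈ P, p ∉ F → sig₁ p = H p ∧ sig₂ p = H p)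
    (S₁ S₂ : Finset α)
    (hS₁ : S₁ ⊆ P) (hS₁card : S₁.card = f + 1)
    (hS₂ : S₂ ⊆ P) (hS₂card : S₂.card = f + 1)
    (h₁ h₂ : β)
    (hjust₁ : ∀ p ∈ S₁, sig₁ p = h₁)
    (hjust₂ : ∀ p ∈ S₂, sig₂ p = h₂) :
    h₁ = h₂ := by
  have correct : ∀ (S : Finset α), S ⊆ P → S.card = f + 1 →
      ∃ p ∈ S, p ∈ P ∧ p ∉ F := by
    intro S hSP hScard
    by_contra hc
    push_neg at hc
    have hsub : S ⊆ F := by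
      intro p hp
      by_contra hpF
      exact hpF (hc p hp (hSP hp))
    have := Finset.card_le_card hsub
    omega
  obtain ⟨p₁, hp₁S, hp₁P, hp₁F⟩ := correct S₁ hS₁ hS₁card
  obtain ⟨p₂, hp₂S, hp₂P, hp₂F⟩ := correct S₂ hS₂ hS₂card
  have e1 := (hsig p₁ hp₁P hp₁F).1
  have e2 := (hsig p₂ hp₂P hp₂F).2
  rw [← hjust₁ p₁ hp₁S, e1, hdet p₁ hp₁P hp₁F,
      ← hdet p₂ hp₂P hp₂F, ← e2, hjust₂ p₂ hp₂S]
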